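/- arXiv:1809.09047 — 3 statements merged into one kernel-verified Lean document; each statement's English description precedes it below -/
import Mathlib

section
/- Let u and v be factors of the same length m of a Sturmian word of irrational slope α. Then u and v are abelian equivalent if and only if the points x_u and x_v of the circle ℝ/ℤ associated to the cylinder sets [u] and [v] both lie in the arc from 0 to {−mα}, or both lie in the arc from {−mα} to 1. -/
/-!
The letters of a Sturmian word are first differences of `n ↦ ⌊nα + x⌋`, so the prefix of
length `m` with intercept `x ∈ [0, 1)` contains exactly `⌊mα + x⌋` ones; being binary words of the
same length, two prefixes are abelian equivalent iff these counts agree. Since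
`mα + {−mα} = ⌈mα⌉`, the count is `⌈mα⌉ − 1` for `x < {−mα}` and `⌈mα⌉` for `x ≥ {−mα}`.
-/

/-- The `n`-th letter of the Sturmian word of slope `α` and intercept `x`:
`s(n) = ⌊(n+1)α + x⌋ − ⌊nα + x⌋`. -/
noncomputable def sturmianLetter (α x : ℝ) (n : ℕ) : ℤ :=
  ⌊((n : ℝ) + 1) * α + x⌋ - ⌊(n : ℝ) * α + x⌋

/-- The prefix of length `m` of the Sturmian word of slope `α` and intercept `x`. -/
noncomputable def sturmianPrefix (α x : ℝ) (m : ℕ) : List ℤ :=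
  (List.range m).map (sturmianLetter α x)

/-- Abelian equivalence of words over `{0,1} ⊆ ℤ`: equal numbers of `0`s and of `1`s. -/
def AbelianEq (u v : List ℤ) : Prop :=
  u.count 0 = v.count 0 ∧ u.count 1 = v.count 1

lemma Int.floor_add_eq_ite_fract_neg (β : ℝ) {x : ℝ} (hx : x ∈ Set.Ico (0 : ℝ) 1) :
    ⌊β + x⌋ = if x < Int.fract (-β) then ⌈β⌉ - 1 else ⌈β⌉ := by
  have hfract : Int.fract (-β) = ⌈β⌉ - β := by
    rw [Int.fract, Int.floor_neg]; push_cast; ring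
  have hceil_lt : (⌈β⌉ : ℝ) < β + 1 := Int.ceil_lt_add_one β
  have hle_ceil : β ≤ ⌈β⌉ := Int.le_ceil β
  obtain ⟨hx0, hx1⟩ := hx
  split_ifs with h
  · rw [Int.floor_eq_iff]; push_cast; constructor <;> linarith
  · rw [Int.floor_eq_iff]; constructor <;> linarith

lemma Int.floor_add_eq_floor_add_iff (β : ℝ) {x y : ℝ}
    (hx : x ∈ Set.Ico (0 : ℝ) 1) (hy : y ∈ Set.Ico (0 : ℝ) 1) :
    ⌊β + x⌋ = ⌊β + y⌋ ↔
      (x < Int.fract (-β) ∧ y < Int.fract (-β)) ∨ (Int.fract (-β) ≤ x ∧ Int.fract (-β) ≤ y) := by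
  rw [Int.floor_add_eq_ite_fract_neg β hx, Int.floor_add_eq_ite_fract_neg β hy]
  by_cases h : x < Int.fract (-β) <;> by_cases h' : y < Int.fract (-β) <;>
    simp [h, h', le_of_not_gt, not_le_of_gt]
  all_goals omega

section BinaryWords

variable {l u v : List ℤ}

lemma List.sum_eq_count_one_of_binary (hl : ∀ z ∈ l, z = 0 ∨ z = 1) :
    l.sum = (l.count 1 : ℤ) := by
  induction l with
  | nil => simp
  | cons a t ih =>
    rw [List.forall_mem_cons] at hl
    rcases hl.1 with rfl | rfl <;> simp [ih hl.2, add_comm]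

lemma List.count_zero_add_count_one_of_binary (hl : ∀ z ∈ l, z = 0 ∨ z = 1) :
    l.count 0 + l.count 1 = l.length := by
  induction l with
  | nil => simp
  | cons a t ih =>
    rw [List.forall_mem_cons] at hl
    have := ih hl.2
    rcases hl.1 with rfl | rfl <;> simp <;> omega

lemma abelianEq_iff_sum_eq_of_binary (hu : ∀ z ∈ u, z = 0 ∨ z = 1)
    (hv : ∀ z ∈ v, z = 0 ∨ z = 1) (hlen : u.length = v.length) :
    AbelianEq u v ↔ u.sum = v.sum := by
  rw [List.sum_eq_count_one_of_binary hu, List.sum_eq_count_one_of_binary hv, Nat.cast_inj]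
  have hu' := List.count_zero_add_count_one_of_binary hu
  have hv' := List.count_zero_add_count_one_of_binary hv
  exact ⟨And.right, fun h => ⟨by omega, h⟩⟩

end BinaryWords

section Sturmian

variable {α : ℝ}

lemma sturmianLetter_eq_zero_or_one (h0 : 0 ≤ α) (h1 : α ≤ 1) (x : ℝ) (n : ℕ) :
    sturmianLetter α x n = 0 ∨ sturmianLetter α x n = 1 := by
  have hshift : ((n : ℝ) + 1) * α + x = ((n : ℝ) * α + x) + α := by ring
  have hlo : ⌊(n : ℝ) * α + x⌋ ≤ ⌊((n : ℝ) * α + x) + α⌋ := Int.floor_le_floor (by linarith)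
  have hhi : ⌊((n : ℝ) * α + x) + α⌋ ≤ ⌊(n : ℝ) * α + x⌋ + 1 := by
    rw [← Int.floor_add_one]; exact Int.floor_le_floor (by linarith)
  rw [sturmianLetter, hshift]
  omega

lemma sturmianPrefix_binary (h0 : 0 ≤ α) (h1 : α ≤ 1) (x : ℝ) (m : ℕ) :
    ∀ z ∈ sturmianPrefix α x m, z = 0 ∨ z = 1 := by
  simp only [sturmianPrefix, List.mem_map]
  rintro _ ⟨n, -, rfl⟩
  exact sturmianLetter_eq_zero_or_one h0 h1 x n

@[simp]
lemma length_sturmianPrefix (α x : ℝ) (m : ℕ) : (sturmianPrefix α x m).length = m := by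
  simp [sturmianPrefix]

lemma sum_sturmianPrefix (α x : ℝ) (m : ℕ) :
    (sturmianPrefix α x m).sum = ⌊(m : ℝ) * α + x⌋ - ⌊x⌋ := by
  induction m with
  | zero => simp [sturmianPrefix]
  | succ n ih =>
    rw [sturmianPrefix, List.range_succ, List.map_append, List.sum_append, ← sturmianPrefix, ih]
    simp only [List.map_cons, List.map_nil, List.sum_cons, List.sum_nil, sturmianLetter]
    push_cast
    ring

end Sturmian

theorem abelian_equivalence_iff_same_side_general (α : ℝ)
    (hmem : α ∈ Set.Ioo (0:ℝ) 1) (m : ℕ)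
    (x y : ℝ) (hx : x ∈ Set.Ico (0:ℝ) 1) (hy : y ∈ Set.Ico (0:ℝ) 1) :
    AbelianEq (sturmianPrefix α x m) (sturmianPrefix α y m) ↔
      ((x < Int.fract (-(m : ℝ) * α) ∧ y < Int.fract (-(m : ℝ) * α)) ∨
        (Int.fract (-(m : ℝ) * α) ≤ x ∧ Int.fract (-(m : ℝ) * α) ≤ y)) := by
  obtain ⟨hα0, hα1⟩ := hmem
  rw [abelianEq_iff_sum_eq_of_binary (sturmianPrefix_binary hα0.le hα1.le x m)
      (sturmianPrefix_binary hα0.le hα1.le y m) (by simp),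
    sum_sturmianPrefix, sum_sturmianPrefix, Int.floor_eq_zero_iff.mpr hx,
    Int.floor_eq_zero_iff.mpr hy, sub_zero, sub_zero, neg_mul]
  exact Int.floor_add_eq_floor_add_iff _ hx hy

theorem abelian_equivalence_iff_same_side (α : ℝ) (hα : Irrational α)
    (hmem : α ∈ Set.Ioo (0:ℝ) 1) (m : ℕ) (hm : 1 ≤ m)
    (x y : ℝ) (hx : x ∈ Set.Ico (0:ℝ) 1) (hy : y ∈ Set.Ico (0:ℝ) 1) :
    AbelianEq (sturmianPrefix α x m) (sturmianPrefix α y m) ↔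
      ((x < Int.fract (-(m : ℝ) * α) ∧ y < Int.fract (-(m : ℝ) * α)) ∨
        (Int.fract (-(m : ℝ) * α) ≤ x ∧ Int.fract (-(m : ℝ) * α) ≤ y)) :=
  abelian_equivalence_iff_same_side_general α hmem m x y hx hy
end

section
/- Let α ∈ (0,1) be irrational, m ≥ 1, n ≥ 2 integers, and x ∈ ℝ/ℤ. The Sturmian word of slope α and intercept x begins with an abelian power of period m and exponent n if and only if the n points x, x + mα, …, x + (n−1)mα (mod 1) all lie in the arc I(0, {−mα}) or all lie in the arc I({−mα}, 1) of the circle. -/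
/-- The `j`-th block of length `m` of the Sturmian word of slope `α` and intercept `x`,
i.e. its factor of length `m` starting at position `j·m`. -/
noncomputable def sturmianBlock (α x : ℝ) (m j : ℕ) : List ℤ :=
  (List.range m).map (fun i => sturmianLetter α x (j * m + i))

/-- The Sturmian word of slope `α` and intercept `x` begins with an abelian power of
period `m` and exponent `n`: its first `n` blocks of length `m` are pairwise
abelian equivalent. -/
noncomputable def BeginsWithAbelianPower (α x : ℝ) (m n : ℕ) : Prop :=
  ∀ i < n, ∀ j < n, AbelianEq (sturmianBlock α x m i) (sturmianBlock α x m j)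

/-! The `j`-th block has sum `⌊x + (j+1)mα⌋ - ⌊x + jmα⌋`, and since `mα` is not an integer this is
`⌊mα⌋` or `⌊mα⌋ + 1` according as `{x + jmα}` lies below `{-mα}` or not. Blocks are `0`-`1` words of
the same length `m`, so two of them are abelian equivalent exactly when their sums agree, i.e. when
their starting points lie on the same side of `{-mα}`. -/

lemma List.count_one_eq_sum_of_forall_eq_zero_or_eq_one {u : List ℤ}
    (hu : ∀ a ∈ u, a = 0 ∨ a = 1) : (u.count 1 : ℤ) = u.sum := by
  induction u with
  | nil => simp
  | cons a t ih =>
    rcases hu a List.mem_cons_self with rfl | rfl <;>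
      simp [ih fun b hb => hu b (List.mem_cons_of_mem _ hb), add_comm]

lemma List.count_zero_add_count_one_of_forall_eq_zero_or_eq_one {u : List ℤ}
    (hu : ∀ a ∈ u, a = 0 ∨ a = 1) : u.count 0 + u.count 1 = u.length := by
  induction u with
  | nil => simp
  | cons a t ih =>
    have := ih fun b hb => hu b (List.mem_cons_of_mem _ hb)
    rcases hu a List.mem_cons_self with rfl | rfl <;> simp <;> omega

lemma abelianEq_iff_sum_eq {u v : List ℤ} (hu : ∀ a ∈ u, a = 0 ∨ a = 1)
    (hv : ∀ a ∈ v, a = 0 ∨ a = 1) (hlen : u.length = v.length) :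
    AbelianEq u v ↔ u.sum = v.sum := by
  have hu0 := List.count_zero_add_count_one_of_forall_eq_zero_or_eq_one hu
  have hv0 := List.count_zero_add_count_one_of_forall_eq_zero_or_eq_one hv
  rw [AbelianEq, ← List.count_one_eq_sum_of_forall_eq_zero_or_eq_one hu,
    ← List.count_one_eq_sum_of_forall_eq_zero_or_eq_one hv, Nat.cast_inj]
  omega

lemma Int.floor_add_sub_floor {R : Type*} [Field R] [LinearOrder R] [IsStrictOrderedRing R]
    [FloorRing R] (y β : R) (hβ : Int.fract β ≠ 0) :
    ⌊y + β⌋ - ⌊y⌋ = ⌊β⌋ + if Int.fract y < Int.fract (-β) then 0 else 1 := by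
  have hsplit : y + β = Int.fract y + Int.fract β + (⌊y⌋ + ⌊β⌋ : ℤ) := by
    push_cast
    linarith [Int.fract_add_floor y, Int.fract_add_floor β]
  rw [hsplit, Int.floor_add_intCast, Int.fract_neg hβ]
  have := Int.fract_nonneg y
  have := Int.fract_lt_one y
  have := Int.fract_nonneg β
  have := Int.fract_lt_one β
  split_ifs with h
  · rw [Int.floor_eq_zero_iff.2 ⟨by positivity, by linarith⟩]; ring
  · rw [(Int.floor_eq_iff (z := 1)).2 ⟨by push_cast; linarith, by push_cast; linarith⟩]; ring

section Sturmian

variable {α : ℝ} (x : ℝ)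

lemma sturmianLetter_eq_zero_or_eq_one (hα : α ∈ Set.Icc (0 : ℝ) 1) (k : ℕ) :
    sturmianLetter α x k = 0 ∨ sturmianLetter α x k = 1 := by
  have hle : ⌊(k : ℝ) * α + x⌋ ≤ ⌊((k : ℝ) + 1) * α + x⌋ :=
    Int.floor_le_floor (by nlinarith [hα.1])
  have hle_succ : ⌊((k : ℝ) + 1) * α + x⌋ ≤ ⌊(k : ℝ) * α + x⌋ + 1 := by
    rw [← Int.floor_add_one]
    exact Int.floor_le_floor (by nlinarith [hα.2])
  unfold sturmianLetter
  omega

lemma sum_map_range_sturmianLetter (k m : ℕ) :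
    ((List.range m).map fun i => sturmianLetter α x (k + i)).sum
      = ⌊((k + m : ℕ) : ℝ) * α + x⌋ - ⌊(k : ℝ) * α + x⌋ := by
  induction m with
  | zero => simp
  | succ m ih =>
    rw [List.range_succ, List.map_append, List.sum_append, ih]
    simp only [sturmianLetter, List.map_cons, List.map_nil, List.sum_cons, List.sum_nil]
    push_cast
    ring_nf

lemma sturmianBlock_sum (m j : ℕ) (hmα : Int.fract (m * α) ≠ 0) :
    (sturmianBlock α x m j).sum = ⌊(m : ℝ) * α⌋ +
      if Int.fract (x + j * m * α) < Int.fract (-(m : ℝ) * α) then 0 else 1 := by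
  rw [sturmianBlock, sum_map_range_sturmianLetter, neg_mul,
    ← Int.floor_add_sub_floor _ _ hmα]
  congr 2 <;> push_cast <;> ring

lemma sturmianBlock_abelianEq_iff (hα : α ∈ Set.Icc (0 : ℝ) 1) {m : ℕ}
    (hmα : Int.fract (m * α) ≠ 0) (i j : ℕ) :
    AbelianEq (sturmianBlock α x m i) (sturmianBlock α x m j) ↔
      (Int.fract (x + i * m * α) < Int.fract (-(m : ℝ) * α) ↔
        Int.fract (x + j * m * α) < Int.fract (-(m : ℝ) * α)) := by
  have hbin (k : ℕ) : ∀ a ∈ sturmianBlock α x m k, a = 0 ∨ a = 1 := by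
    simp only [sturmianBlock, List.mem_map, List.mem_range]
    rintro a ⟨l, -, rfl⟩
    exact sturmianLetter_eq_zero_or_eq_one x hα _
  rw [abelianEq_iff_sum_eq (hbin i) (hbin j) (by simp [sturmianBlock]),
    sturmianBlock_sum x m i hmα, sturmianBlock_sum x m j hmα]
  split_ifs with hi hj hj <;> simp [-neg_mul, hi, hj]

end Sturmian

lemma forall_iff_forall_or_forall_not {ι : Type*} (q p : ι → Prop) :
    (∀ i, q i → ∀ j, q j → (p i ↔ p j)) ↔ (∀ i, q i → p i) ∨ ∀ i, q i → ¬p i := by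
  grind

theorem begins_with_abelian_power_iff_general (α : ℝ) (hα : Irrational α)
    (hmem : α ∈ Set.Ioo (0:ℝ) 1) (m n : ℕ) (hm : 1 ≤ m) (x : ℝ) :
    BeginsWithAbelianPower α x m n ↔
      ((∀ j < n, Int.fract (x + (j : ℝ) * m * α) < Int.fract (-(m : ℝ) * α)) ∨
        (∀ j < n, Int.fract (-(m : ℝ) * α) ≤ Int.fract (x + (j : ℝ) * m * α))) := by
  have hmα : Int.fract ((m : ℝ) * α) ≠ 0 := Int.fract_ne_zero_iff.2
    fun ⟨k, hk⟩ => (hα.natCast_mul (by omega)).ne_int k hk.symm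
  simp only [BeginsWithAbelianPower,
    sturmianBlock_abelianEq_iff x (Set.Ioo_subset_Icc_self hmem) hmα]
  simpa only [not_lt] using forall_iff_forall_or_forall_not (· < n)
    fun j : ℕ => Int.fract (x + j * m * α) < Int.fract (-(m : ℝ) * α)

theorem begins_with_abelian_power_iff (α : ℝ) (hα : Irrational α)
    (hmem : α ∈ Set.Ioo (0:ℝ) 1) (m n : ℕ) (hm : 1 ≤ m) (hn : 2 ≤ n) (x : ℝ) :
    BeginsWithAbelianPower α x m n ↔
      ((∀ j < n, Int.fract (x + (j : ℝ) * m * α) < Int.fract (-(m : ℝ) * α)) ∨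
        (∀ j < n, Int.fract (-(m : ℝ) * α) ≤ Int.fract (x + (j : ℝ) * m * α))) :=
  begins_with_abelian_power_iff_general α hα hmem m n hm x
end

section
/- Let s be a balanced infinite binary word, and let x and y be factors of s ending in the letter 0 such that |x| + |x|_0 = |y| + |y|_0. Then |x| = |y| and |x|_0 = |y|_0 (so x and y are abelian equivalent). -/
/-- `u` is a factor (contiguous subword) of the infinite binary word `s : ℕ → Bool`.
The letter `0` is modelled by `false` and `1` by `true`. -/
def IsFactor (s : ℕ → Bool) (u : List Bool) : Prop :=
  ∃ i : ℕ, u = (List.range u.length).map (fun j => s (i + j))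

/-- An infinite binary word is balanced if the numbers of `0`s in any two factors of
equal length differ by at most `1`. -/
def IsBalanced (s : ℕ → Bool) : Prop :=
  ∀ u v : List Bool, IsFactor s u → IsFactor s v → u.length = v.length →
    |(u.count false : ℤ) - (v.count false : ℤ)| ≤ 1

lemma isFactor_take (s : ℕ → Bool) (u : List Bool) (h : IsFactor s u) (n : ℕ) :
    IsFactor s (u.take n) := by
  obtain ⟨i, hi⟩ := h
  refine ⟨i, ?_⟩
  conv_lhs => rw [hi]
  rw [← List.map_take, List.take_range, List.length_take, hi, List.length_map,
    List.length_range]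

lemma aux_len_le (s : ℕ → Bool) (hs : IsBalanced s)
    (x y : List Bool) (hx : IsFactor s x) (hy : IsFactor s y)
    (hy0 : y.getLast? = some false)
    (hsum : x.length + x.count false = y.length + y.count false)
    (hle : x.length ≤ y.length) : x.length = y.length := by
  by_contra hne
  have hlt : x.length < y.length := lt_of_le_of_ne hle hne
  set n := x.length with hn
  -- prefix of y of length n
  have hu : IsFactor s (y.take n) := isFactor_take s y hy n
  have hulen : (y.take n).length = n := by
    rw [List.length_take]; omega
  have hbal := hs x (y.take n) hx hu (by rw [hulen])
  have hucount : (y.take n).count false ≤ y.count false :=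
    (y.take_sublist n).count_le false
  -- y = w ++ [false]
  obtain ⟨w, hw⟩ : ∃ w, y = w ++ [false] := by
    rcases List.eq_nil_or_concat y with h | ⟨w, a, hwa⟩
    · simp [h] at hy0
    · refine ⟨w, ?_⟩
      rw [hwa] at hy0 ⊢
      simp only [List.concat_eq_append, List.getLast?_append, List.getLast?_singleton,
        Option.or] at hy0 ⊢
      simp_all
  have hwlen : w.length + 1 = y.length := by rw [hw]; simp
  have hycount : y.count false = w.count false + 1 := by rw [hw]; simp
  -- balanced bound with abs
  rw [abs_le] at hbal
  have h1 : (x.count false : ℤ) - (y.take n).count false ≤ 1 := hbal.2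
  -- arithmetic: x_0 = y_0 + (m - n), so take-count ≥ y_0 + (m-n) - 1 but ≤ y_0
  have hmn : y.length = n + 1 := by
    have : (x.count false : ℤ) = y.count false + (y.length - n) := by
      omega
    omega
  -- now w has length n, so y.take n = w
  have hwn : w.length = n := by omega
  have htw : y.take n = w := by
    rw [hw, ← hwn, List.take_left]
  rw [htw] at h1 hucount
  omega

theorem abelian_eq_of_balanced_count (s : ℕ → Bool) (hs : IsBalanced s)
    (x y : List Bool) (hx : IsFactor s x) (hy : IsFactor s y)
    (hx0 : x.getLast? = some false) (hy0 : y.getLast? = some false)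
    (hsum : x.length + x.count false = y.length + y.count false) :
    x.length = y.length ∧ x.count false = y.count false := by
  have hlen : x.length = y.length := by
    rcases le_total x.length y.length with h | h
    · exact aux_len_le s hs x y hx hy hy0 hsum h
    · exact (aux_len_le s hs y x hy hx hx0 hsum.symm h).symm
  exact ⟨hlen, by omega⟩
end
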